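/- arXiv:1306.4928 — 7 statements merged into one kernel-verified Lean document; each statement's English description precedes it below -/
import Mathlib

section
/- In a noetherian pointed abelian monoid, every irreducible ideal is primary. -/
/-- An ideal of a pointed (commutative) monoid with zero: a subset `I` with `AI ⊆ I`
(containing the basepoint `0`). -/
def IsIdeal {A : Type*} [CommMonoidWithZero A] (I : Set A) : Prop :=
  (0 : A) ∈ I ∧ ∀ a x : A, x ∈ I → a * x ∈ I

/-- A proper ideal `q` is primary when `x*y ∈ q` implies `x ∈ q` or `y^n ∈ q` for some `n ≥ 1`. -/
def IsPrimaryIdeal {A : Type*} [CommMonoidWithZero A] (q : Set A) : Prop :=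
  IsIdeal q ∧ q ≠ Set.univ ∧
    ∀ x y : A, x * y ∈ q → x ∈ q ∨ ∃ n : ℕ, 1 ≤ n ∧ y ^ n ∈ q

/-- A proper ideal `I` is irreducible when `I = J ∩ K` for ideals `J, K` implies `I = J` or `I = K`. -/
def IsIrreducibleIdeal {A : Type*} [CommMonoidWithZero A] (I : Set A) : Prop :=
  IsIdeal I ∧ I ≠ Set.univ ∧
    ∀ J K : Set A, IsIdeal J → IsIdeal K → I = J ∩ K → I = J ∨ I = K

/-- Noetherian: the ascending chain condition on ideals. -/
def IsNoetherianMonoid (A : Type*) [CommMonoidWithZero A] : Prop :=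
  ∀ f : ℕ → Set A, (∀ n, IsIdeal (f n)) → (∀ n, f n ⊆ f (n + 1)) →
    ∃ N, ∀ m, N ≤ m → f m = f N

/-- In a noetherian pointed abelian monoid, every irreducible ideal is primary. -/
theorem irreducible_ideal_isPrimary {A : Type*} [CommMonoidWithZero A]
    (hA : IsNoetherianMonoid A) (I : Set A) (hI : IsIrreducibleIdeal I) :
    IsPrimaryIdeal I := by
  obtain ⟨hIdeal, hne, hirr⟩ := hI
  refine ⟨hIdeal, hne, ?_⟩
  intro x y hxy
  by_contra h
  push_neg at h
  obtain ⟨hx, hy⟩ := h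
  -- the chain of ideals (I : y^n)
  set f : ℕ → Set A := fun n => {a | a * y ^ n ∈ I} with hf
  have hfIdeal : ∀ n, IsIdeal (f n) := by
    intro n
    constructor
    · show (0 : A) * y ^ n ∈ I
      rw [zero_mul]; exact hIdeal.1
    · intro a b hb
      show a * b * y ^ n ∈ I
      rw [mul_assoc]
      exact hIdeal.2 a _ hb
  have hfmono : ∀ n, f n ⊆ f (n + 1) := by
    intro n a ha
    show a * y ^ (n + 1) ∈ I
    rw [pow_succ, ← mul_assoc]
    exact mul_comm y (a * y ^ n) ▸ hIdeal.2 y _ ha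
  obtain ⟨N, hN⟩ := hA f hfIdeal hfmono
  set n := N + 1 with hn
  -- J = I ∪ A·x, K = I ∪ A·y^n
  set J : Set A := I ∪ {z | ∃ a, z = a * x} with hJ
  set K : Set A := I ∪ {z | ∃ a, z = a * y ^ n} with hK
  have hJIdeal : IsIdeal J := by
    refine ⟨Or.inl hIdeal.1, ?_⟩
    rintro a z (hz | ⟨b, rfl⟩)
    · exact Or.inl (hIdeal.2 a z hz)
    · exact Or.inr ⟨a * b, by rw [mul_assoc]⟩
  have hKIdeal : IsIdeal K := by
    refine ⟨Or.inl hIdeal.1, ?_⟩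
    rintro a z (hz | ⟨b, rfl⟩)
    · exact Or.inl (hIdeal.2 a z hz)
    · exact Or.inr ⟨a * b, by rw [mul_assoc]⟩
  have hIJK : I = J ∩ K := by
    apply Set.Subset.antisymm
    · intro z hz; exact ⟨Or.inl hz, Or.inl hz⟩
    · rintro z ⟨(hz | ⟨a, rfl⟩), hz2⟩
      · exact hz
      rcases hz2 with hz2 | ⟨b, hb⟩
      · exact hz2
      -- z = a * x = b * y ^ n, and z * y ∈ I
      have hzy : a * x * y ∈ I := by
        rw [mul_assoc]
        exact hIdeal.2 a _ hxy
      have hb' : b ∈ f (n + 1) := by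
        show b * y ^ (n + 1) ∈ I
        rw [pow_succ, ← mul_assoc, ← hb]
        exact hzy
      have : b ∈ f N := by
        rw [← hN (n + 1) (by omega)]; exact hb'
      have : b ∈ f n := by rw [hN n (by omega)]; exact this
      rw [hb]; exact this
  rcases hirr J K hJIdeal hKIdeal hIJK with hEq | hEq
  · exact hx (hEq ▸ (Or.inr ⟨1, (one_mul x).symm⟩ : x ∈ J))
  · exact hy n (by omega) (hEq ▸ (Or.inr ⟨1, (one_mul _).symm⟩ : y ^ n ∈ K))
end

section
/- Every one-dimensional, noetherian, normal cancellative pointed abelian monoid A is a discrete valuation monoid: the maximal ideal m of non-units is principal, generated by some π, and every nonzero a ∈ A can be written uniquely as a = uπⁿ with u ∈ A× and n ≥ 0. -/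
/- A cancellative pointed abelian monoid is modeled as a multiplicative subset `A`
(containing `0` and `1`) of a commutative group with zero `G`; the hypothesis
`IsGroupCompletion A` says that `G` is the group completion `A₀` of `A`. -/

def IsSubmonoidWithZero {G : Type*} [CommGroupWithZero G] (A : Set G) : Prop :=
  (0 : G) ∈ A ∧ (1 : G) ∈ A ∧ ∀ x ∈ A, ∀ y ∈ A, x * y ∈ A

/-- `G` is the group completion of `A`: every element is a ratio of elements of `A`. -/
def IsGroupCompletion {G : Type*} [CommGroupWithZero G] (A : Set G) : Prop :=
  ∀ g : G, ∃ a ∈ A, ∃ b ∈ A, b ≠ 0 ∧ g = a / b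

/-- `A` is normal: every element of the group completion integral over `A` lies in `A`. -/
def IsNormalMonoid {G : Type*} [CommGroupWithZero G] (A : Set G) : Prop :=
  ∀ g : G, (∃ n : ℕ, 1 ≤ n ∧ g ^ n ∈ A) → g ∈ A

/-- An ideal of `A` (as a subset of `G`). -/
def IsIdealIn {G : Type*} [CommGroupWithZero G] (A I : Set G) : Prop :=
  I ⊆ A ∧ (0 : G) ∈ I ∧ ∀ a ∈ A, ∀ x ∈ I, a * x ∈ I

def IsPrimeIn {G : Type*} [CommGroupWithZero G] (A p : Set G) : Prop :=
  IsIdealIn A p ∧ p ≠ A ∧ ∀ x ∈ A, ∀ y ∈ A, x * y ∈ p → x ∈ p ∨ y ∈ p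

/-- Noetherian: ACC on ideals of `A`. -/
def IsNoetherianIn {G : Type*} [CommGroupWithZero G] (A : Set G) : Prop :=
  ∀ f : ℕ → Set G, (∀ n, IsIdealIn A (f n)) → (∀ n, f n ⊆ f (n + 1)) →
    ∃ N, ∀ m, N ≤ m → f m = f N

/-- The localization of `A` at the complement of a prime `p`, inside `G = A₀`. -/
def locAt {G : Type*} [CommGroupWithZero G] (A p : Set G) : Set G :=
  {g : G | ∃ x ∈ A, ∃ s ∈ A, s ∉ p ∧ g = x / s}

/-- `p` has height one: the only prime strictly contained in `p` is `{0}`. -/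
def HeightOne {G : Type*} [CommGroupWithZero G] (A p : Set G) : Prop :=
  p ≠ {0} ∧ ∀ q : Set G, IsPrimeIn A q → q ⊆ p → q = {0} ∨ q = p

theorem my_pow_mem_of_mem {G : Type*} [CommGroupWithZero G] {A : Set G}
    (hA : IsSubmonoidWithZero A) {a : G} (ha : a ∈ A) : ∀ n : ℕ, a ^ n ∈ A
  | 0 => by simpa using hA.2.1
  | n + 1 => by rw [pow_succ]; exact hA.2.2 _ (my_pow_mem_of_mem hA ha n) _ ha

theorem my_exists_maximal_ideal_mem {G : Type*} [CommGroupWithZero G] {A : Set G}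
    (hnoe : IsNoetherianIn A) (F : Set (Set G)) (hF : ∀ I ∈ F, IsIdealIn A I)
    (hne : F.Nonempty) : ∃ I ∈ F, ∀ J ∈ F, I ⊆ J → J = I := by
  by_contra h
  push_neg at h
  obtain ⟨I₀, hI₀⟩ := hne
  choose g hgF hgsub hgne using h
  let g' : {I : Set G // I ∈ F} → {I : Set G // I ∈ F} :=
    fun p => ⟨g p.1 p.2, hgF p.1 p.2⟩
  let f : ℕ → {I : Set G // I ∈ F} := fun n => g'^[n] ⟨I₀, hI₀⟩
  have hsucc : ∀ n, f (n + 1) = g' (f n) := fun n => Function.iterate_succ_apply' g' n _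
  have hsub : ∀ n, (f n).1 ⊆ (f (n + 1)).1 := by
    intro n; rw [hsucc n]; exact hgsub (f n).1 (f n).2
  obtain ⟨N, hN⟩ := hnoe (fun n => (f n).1) (fun n => hF _ (f n).2) hsub
  apply hgne (f N).1 (f N).2
  have h1 : (f (N + 1)).1 = (f N).1 := hN (N + 1) (Nat.le_succ N)
  rw [hsucc N] at h1
  exact h1

/-- Every one-dimensional noetherian normal cancellative pointed abelian monoid is a
discrete valuation monoid: the maximal ideal `m` of non-units is principal, generated
by some `π`, and every nonzero `a ∈ A` is uniquely `u * π ^ n` with `u ∈ A×`, `n ≥ 0`. -/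
theorem one_dim_noetherian_normal_is_DV {G : Type*} [CommGroupWithZero G] (A : Set G)
    (hA : IsSubmonoidWithZero A) (hgc : IsGroupCompletion A)
    (hnor : IsNormalMonoid A) (hnoe : IsNoetherianIn A)
    (m : Set G) (hm : m = {a : G | a ∈ A ∧ ¬∃ v ∈ A, a * v = 1})
    (hdim : IsPrimeIn A m ∧ m ≠ {0} ∧
      ∀ p : Set G, IsPrimeIn A p → p = {0} ∨ p = m) :
    ∃ π ∈ m, m = {x : G | ∃ a ∈ A, x = a * π} ∧
      ∀ a ∈ A, a ≠ 0 →
        ∃! w : G × ℕ, (w.1 ∈ A ∧ ∃ v ∈ A, w.1 * v = 1) ∧ a = w.1 * π ^ w.2 := by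
  classical
  obtain ⟨h0A, h1A, hmulA⟩ := hA
  obtain ⟨hmprime, hmne0, hone⟩ := hdim
  have hmid : IsIdealIn A m := hmprime.1
  have hmA : m ⊆ A := hmid.1
  have h0m : (0 : G) ∈ m := hmid.2.1
  have hmmul : ∀ a ∈ A, ∀ z ∈ m, a * z ∈ m := hmid.2.2
  have hmdef : ∀ z : G, z ∈ m ↔ z ∈ A ∧ ¬∃ v ∈ A, z * v = 1 := by
    intro z; rw [hm]; exact Iff.rfl
  obtain ⟨t, htm, ht0⟩ : ∃ t ∈ m, t ≠ 0 := by
    by_contra h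
    push_neg at h
    apply hmne0
    ext z
    simp only [Set.mem_singleton_iff]
    exact ⟨fun hz => h z hz, fun hz => hz ▸ h0m⟩
  have htA : t ∈ A := hmA htm
  have htnu : ¬∃ v ∈ A, t * v = 1 := ((hmdef t).1 htm).2
  set col : G → Set G := fun a => {z | z ∈ A ∧ ∃ c ∈ A, z * a = t * c} with hcol
  have hcolid : ∀ a ∈ A, IsIdealIn A (col a) := by
    intro a ha
    refine ⟨fun z hz => hz.1, ⟨h0A, 0, h0A, by simp⟩, ?_⟩
    intro b hb z hz
    obtain ⟨hzA, c, hc, hzc⟩ := hz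
    exact ⟨hmulA b hb z hzA, b * c, hmulA b hb c hc, by
      rw [mul_assoc, hzc]; ac_rfl⟩
  set F : Set (Set G) := {I | ∃ a, a ∈ A ∧ a ≠ 0 ∧ (¬∃ c ∈ A, a = t * c) ∧ I = col a}
    with hF
  have hFid : ∀ I ∈ F, IsIdealIn A I := by
    rintro I ⟨a, ha, -, -, rfl⟩; exact hcolid a ha
  have hFne : F.Nonempty := by
    refine ⟨col 1, 1, h1A, one_ne_zero, ?_, rfl⟩
    rintro ⟨c, hc, h1c⟩
    exact htnu ⟨c, hc, h1c.symm⟩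
  obtain ⟨p, hpF, hpmax⟩ := my_exists_maximal_ideal_mem hnoe F hFid hFne
  obtain ⟨a, haA, ha0, hatA, rfl⟩ := hpF
  have h1p : (1 : G) ∉ col a := by
    rintro ⟨-, c, hc, h1c⟩
    exact hatA ⟨c, hc, by rw [← h1c, one_mul]⟩
  have hprime : IsPrimeIn A (col a) := by
    refine ⟨hcolid a haA, fun h => h1p (h ▸ h1A), ?_⟩
    intro x hx y hy hxy
    by_cases hyp : y ∈ col a
    · right; exact hyp
    left
    have hy0 : y ≠ 0 := by rintro rfl; exact hyp ⟨h0A, 0, h0A, by simp⟩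
    have hya : ¬∃ c ∈ A, y * a = t * c := fun ⟨c, hc, h⟩ => hyp ⟨hy, c, hc, h⟩
    have hmem : col (y * a) ∈ F :=
      ⟨y * a, hmulA y hy a haA, mul_ne_zero hy0 ha0,
        fun ⟨c, hc, h⟩ => hya ⟨c, hc, h⟩, rfl⟩
    have hsub : col a ⊆ col (y * a) := by
      rintro z ⟨hzA, c, hc, hzc⟩
      refine ⟨hzA, y * c, hmulA y hy c hc, ?_⟩
      rw [show z * (y * a) = y * (z * a) by ac_rfl, hzc]; ac_rfl
    have heqp := hpmax _ hmem hsub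
    rw [← heqp]
    obtain ⟨hxyA, c, hc, hxyc⟩ := hxy
    exact ⟨hx, c, hc, by rw [← hxyc]; ac_rfl⟩
  have htp : t ∈ col a := ⟨htA, a, haA, rfl⟩
  have hpm : col a = m := by
    rcases hone (col a) hprime with h | h
    · exact absurd (h ▸ htp) (by simpa using ht0)
    · exact h
  set x := a / t with hxdef
  have hx0 : x ≠ 0 := div_ne_zero ha0 ht0
  have hxA : x ∉ A := by
    intro hx
    exact hatA ⟨x, hx, by rw [hxdef, mul_comm, div_mul_cancel₀ a ht0]⟩
  have hxm : ∀ z ∈ m, x * z ∈ A := by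
    intro z hz
    rw [← hpm] at hz
    obtain ⟨hzA, c, hc, hzc⟩ := hz
    have hxz : x * z = c := by
      rw [hxdef, div_mul_eq_mul_div, mul_comm a z, hzc, mul_div_cancel_left₀ _ ht0]
    rw [hxz]; exact hc
  have hkey : ∃ y ∈ m, x * y ∉ m := by
    by_contra h
    push_neg at h
    have hpowm : ∀ n : ℕ, x ^ n * t ∈ m := by
      intro n; induction n with
      | zero => simpa using htm
      | succ n ih =>
        rw [pow_succ, mul_comm (x ^ n) x, mul_assoc]; exact h _ ih
    set f : ℕ → Set G := fun n => {z | ∃ c ∈ A, ∃ k ≤ n, z = c * (x ^ k * t)} with hf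
    have hfid : ∀ n, IsIdealIn A (f n) := by
      intro n
      refine ⟨?_, ⟨0, h0A, 0, Nat.zero_le n, by simp⟩, ?_⟩
      · rintro z ⟨c, hc, k, hk, rfl⟩
        exact hmulA c hc _ (hmA (hpowm k))
      · rintro b hb z ⟨c, hc, k, hk, rfl⟩
        exact ⟨b * c, hmulA b hb c hc, k, hk, by ac_rfl⟩
    have hfmono : ∀ n, f n ⊆ f (n + 1) := by
      rintro n z ⟨c, hc, k, hk, rfl⟩
      exact ⟨c, hc, k, hk.trans (Nat.le_succ n), rfl⟩
    obtain ⟨N, hN⟩ := hnoe f hfid hfmono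
    have hmem : x ^ (N + 1) * t ∈ f N := by
      rw [← hN (N + 1) (Nat.le_succ N)]
      exact ⟨1, h1A, N + 1, le_refl _, (one_mul _).symm⟩
    obtain ⟨c, hc, k, hk, heq⟩ := hmem
    have h1 : x ^ (N + 1) = c * x ^ k := by
      apply mul_right_cancel₀ ht0
      rw [heq]; ac_rfl
    have h2 : x ^ (N + 1 - k) = c := by
      apply mul_left_cancel₀ (pow_ne_zero k hx0)
      rw [← pow_add, show k + (N + 1 - k) = N + 1 by omega, h1]
      ac_rfl
    exact hxA (hnor x ⟨N + 1 - k, by omega, h2 ▸ hc⟩)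
  obtain ⟨y, hym, hxy⟩ := hkey
  have hxyA : x * y ∈ A := hxm y hym
  obtain ⟨v, hvA, hv1⟩ : ∃ v ∈ A, (x * y) * v = 1 := by
    by_contra h
    push_neg at h
    exact hxy ((hmdef _).2 ⟨hxyA, fun ⟨v, hv, hv1⟩ => h v hv hv1⟩)
  set π := y * v with hπdef
  have hπm : π ∈ m := by rw [hπdef, mul_comm]; exact hmmul v hvA y hym
  have hπA : π ∈ A := hmA hπm
  have hxπ : x * π = 1 := by rw [hπdef, ← mul_assoc]; exact hv1
  have hπ0 : π ≠ 0 := by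
    rintro h
    rw [h, mul_zero] at hxπ
    exact zero_ne_one hxπ
  have hπnu : ¬∃ w ∈ A, π * w = 1 := ((hmdef π).1 hπm).2
  have hπpow : ∀ k : ℕ, π ^ k ∈ A := fun k =>
    my_pow_mem_of_mem ⟨h0A, h1A, hmulA⟩ hπA k
  refine ⟨π, hπm, ?_, ?_⟩
  · ext z
    constructor
    · intro hz
      exact ⟨x * z, hxm z hz, by
        rw [show x * z * π = (x * π) * z by ac_rfl, hxπ, one_mul]⟩
    · rintro ⟨b, hb, rfl⟩
      exact hmmul b hb π hπm
  intro b hbA hb0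
  have key : ∀ u1 u2 : G, (∃ v1 ∈ A, u1 * v1 = 1) → u2 ∈ A → ∀ k : ℕ, 1 ≤ k →
      u1 = u2 * π ^ k → False := by
    rintro u1 u2 ⟨v1, hv1A, hv11⟩ hu2 k hk hequ
    apply hπnu
    refine ⟨π ^ (k - 1) * u2 * v1, hmulA _ (hmulA _ (hπpow _) _ hu2) _ hv1A, ?_⟩
    have hsp : π * π ^ (k - 1) = π ^ k := by
      rw [← pow_succ']
      congr 1; omega
    calc π * (π ^ (k - 1) * u2 * v1) = (u2 * (π * π ^ (k - 1))) * v1 := by ac_rfl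
      _ = u1 * v1 := by rw [hsp, ← hequ]
      _ = 1 := hv11
  have hstop : ∃ n : ℕ, x ^ n * b ∉ A := by
    by_contra h
    push_neg at h
    set f : ℕ → Set G := fun n => {z | ∃ c ∈ A, z = c * (x ^ n * b)} with hf
    have hfid : ∀ n, IsIdealIn A (f n) := by
      intro n
      refine ⟨?_, ⟨0, h0A, by simp⟩, ?_⟩
      · rintro z ⟨c, hc, rfl⟩
        exact hmulA c hc _ (h n)
      · rintro e he z ⟨c, hc, rfl⟩
        exact ⟨e * c, hmulA e he c hc, by ac_rfl⟩
    have hfmono : ∀ n, f n ⊆ f (n + 1) := by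
      rintro n z ⟨c, hc, rfl⟩
      refine ⟨c * π, hmulA c hc π hπA, ?_⟩
      have hst : x ^ (n + 1) * b * π = x ^ n * b := by
        rw [pow_succ']
        calc x * x ^ n * b * π = (x * π) * (x ^ n * b) := by ac_rfl
          _ = x ^ n * b := by rw [hxπ, one_mul]
      calc c * (x ^ n * b) = c * (x ^ (n + 1) * b * π) := by rw [hst]
        _ = c * π * (x ^ (n + 1) * b) := by ac_rfl
    obtain ⟨N, hN⟩ := hnoe f hfid hfmono
    have hmem : x ^ (N + 1) * b ∈ f N := by
      rw [← hN (N + 1) (Nat.le_succ N)]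
      exact ⟨1, h1A, (one_mul _).symm⟩
    obtain ⟨c, hc, heq⟩ := hmem
    have hxc : x = c := by
      apply mul_right_cancel₀ (mul_ne_zero (pow_ne_zero N hx0) hb0)
      rw [show x * (x ^ N * b) = x ^ (N + 1) * b by rw [pow_succ']; ac_rfl, heq]
    exact hxA (hxc ▸ hc)
  set n0 := Nat.find hstop with hn0
  have hn0spec : x ^ n0 * b ∉ A := Nat.find_spec hstop
  have hn00 : n0 ≠ 0 := by
    intro h
    rw [h, pow_zero, one_mul] at hn0spec
    exact hn0spec hbA
  set n := n0 - 1 with hn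
  have huA : x ^ n * b ∈ A := by
    by_contra h
    have hle : n0 ≤ n := by rw [hn0]; exact Nat.find_le h
    omega
  set u := x ^ n * b with hu
  have hu0 : u ≠ 0 := mul_ne_zero (pow_ne_zero n hx0) hb0
  have hum : u ∉ m := by
    intro hum
    apply hn0spec
    have hxu : x ^ n0 * b = x * u := by
      rw [hu, ← mul_assoc, ← pow_succ']
      congr 2; omega
    rw [hxu]
    exact hxm u hum
  obtain ⟨w, hwA, hw1⟩ : ∃ w ∈ A, u * w = 1 := by
    by_contra hcon
    push_neg at hcon
    exact hum ((hmdef u).2 ⟨huA, fun ⟨w, hw, h1⟩ => hcon w hw h1⟩)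
  have hbfac : b = u * π ^ n := by
    have hxpin : x ^ n * π ^ n = 1 := by rw [← mul_pow, hxπ, one_pow]
    calc b = (x ^ n * π ^ n) * b := by rw [hxpin, one_mul]
      _ = u * π ^ n := by rw [hu]; ac_rfl
  refine ⟨(u, n), ⟨⟨huA, w, hwA, hw1⟩, hbfac⟩, ?_⟩
  rintro ⟨u', n'⟩ ⟨⟨hu'A, v', hv'A, hv'1⟩, hb'⟩
  have hequ : u' * π ^ n' = u * π ^ n := by rw [← hb', ← hbfac]
  have hnn : n' = n := by
    rcases lt_trichotomy n' n with hlt | he | hgt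
    · exfalso
      apply key u' u ⟨v', hv'A, hv'1⟩ huA (n - n') (by omega)
      apply mul_right_cancel₀ (pow_ne_zero n' hπ0)
      rw [mul_assoc u (π ^ (n - n')) (π ^ n'), ← pow_add, show n - n' + n' = n by omega, hequ]
    · exact he
    · exfalso
      apply key u u' ⟨w, hwA, hw1⟩ hu'A (n' - n) (by omega)
      apply mul_right_cancel₀ (pow_ne_zero n hπ0)
      rw [mul_assoc u' (π ^ (n' - n)) (π ^ n), ← pow_add, show n' - n + n = n' by omega, ← hequ]
  have huu : u' = u := by
    rw [hnn] at hequ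
    exact mul_right_cancel₀ (pow_ne_zero n hπ0) hequ
  exact Prod.ext huu hnn
end

section
/- Let A be a noetherian normal cancellative pointed abelian monoid and p a prime ideal associated to a nonzero principal ideal aA (i.e., p = (aA : b) for some b). Then the localization A_p has principal maximal ideal p·A_p, and p has height one. -/
/-- Powers of elements of `A` stay in `A`. -/
lemma aux_powMem {G : Type*} [CommGroupWithZero G] {A : Set G}
    (hA : IsSubmonoidWithZero A) {x : G} (hx : x ∈ A) : ∀ n : ℕ, x ^ n ∈ A
  | 0 => by simpa using hA.2.1
  | n + 1 => by rw [pow_succ]; exact hA.2.2 _ (aux_powMem hA hx n) _ hx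

/-- If a positive power of `x ∈ A` lies in a prime, so does `x`. -/
lemma aux_powInPrime {G : Type*} [CommGroupWithZero G] {A q : Set G}
    (hA : IsSubmonoidWithZero A) (hq : IsPrimeIn A q) {x : G} (hx : x ∈ A) :
    ∀ n : ℕ, x ^ (n + 1) ∈ q → x ∈ q
  | 0, h => by simpa using h
  | n + 1, h => by
    rw [pow_succ] at h
    rcases hq.2.2 _ (aux_powMem hA hx (n + 1)) _ hx h with h' | h'
    · exact aux_powInPrime hA hq hx n h'
    · exact h'

/-- The noetherian chain argument: if `t^n * x ∈ A` for all `n` (with `t, x ≠ 0`),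
then some positive power of `t` lies in `A`. -/
lemma aux_chain {G : Type*} [CommGroupWithZero G] {A : Set G}
    (hA : IsSubmonoidWithZero A) (hnoe : IsNoetherianIn A) {t x : G}
    (ht : t ≠ 0) (hx : x ≠ 0) (h : ∀ n : ℕ, t ^ n * x ∈ A) :
    ∃ k : ℕ, 1 ≤ k ∧ t ^ k ∈ A := by
  set f : ℕ → Set G := fun n => {g | g = 0 ∨ ∃ c ∈ A, ∃ k ≤ n, g = c * (t ^ k * x)} with hf
  have hid : ∀ n, IsIdealIn A (f n) := by
    intro n
    refine ⟨?_, Or.inl rfl, ?_⟩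
    · rintro g (rfl | ⟨c, hc, k, hk, rfl⟩)
      · exact hA.1
      · exact hA.2.2 _ hc _ (h k)
    · rintro c hc g (rfl | ⟨d, hd, k, hk, rfl⟩)
      · exact Or.inl (mul_zero c)
      · exact Or.inr ⟨c * d, hA.2.2 _ hc _ hd, k, hk, (mul_assoc c d _).symm⟩
  have hmono : ∀ n, f n ⊆ f (n + 1) := by
    rintro n g (rfl | ⟨c, hc, k, hk, rfl⟩)
    · exact Or.inl rfl
    · exact Or.inr ⟨c, hc, k, hk.trans (Nat.le_succ n), rfl⟩
  obtain ⟨N, hN⟩ := hnoe f hid hmono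
  have hmem : t ^ (N + 1) * x ∈ f N := by
    rw [← hN (N + 1) (Nat.le_succ N)]
    exact Or.inr ⟨1, hA.2.1, N + 1, le_refl _, (one_mul _).symm⟩
  rcases hmem with h0 | ⟨c, hc, k, hk, heq⟩
  · exact absurd h0 (mul_ne_zero (pow_ne_zero _ ht) hx)
  · refine ⟨N + 1 - k, by omega, ?_⟩
    have h1 : t ^ (N + 1) = c * t ^ k := by
      apply mul_right_cancel₀ hx
      rw [heq, mul_assoc]
    have h2 : t ^ (N + 1 - k) = c := by
      rw [pow_sub₀ t ht (by omega : k ≤ N + 1), h1, mul_assoc,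
        mul_inv_cancel₀ (pow_ne_zero k ht), mul_one]
    rwa [h2]

/-- In a noetherian normal cancellative monoid, a prime `p` associated to a nonzero
principal ideal `aA` has height one, and `p·A_p` is a principal ideal of `A_p`. -/
theorem associated_prime_of_principal {G : Type*} [CommGroupWithZero G] (A : Set G)
    (hA : IsSubmonoidWithZero A) (hgc : IsGroupCompletion A)
    (hnor : IsNormalMonoid A) (hnoe : IsNoetherianIn A)
    (a : G) (haA : a ∈ A) (ha : a ≠ 0) (b : G) (hb : b ∈ A)
    (p : Set G) (hp : IsPrimeIn A p)
    (hass : p = {x : G | x ∈ A ∧ x * b ∈ {y : G | ∃ c ∈ A, y = a * c}}) :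
    HeightOne A p ∧
      ∃ π ∈ {g : G | ∃ x ∈ p, ∃ s ∈ A, s ∉ p ∧ g = x / s},
        {g : G | ∃ x ∈ p, ∃ s ∈ A, s ∉ p ∧ g = x / s} =
          {g : G | ∃ h ∈ locAt A p, g = π * h} := by
  obtain ⟨⟨hpsub, hp0, hpmul⟩, hpne, hpprime⟩ := hp
  -- b ≠ 0
  have hb0 : b ≠ 0 := by
    intro h0
    apply hpne
    apply Set.Subset.antisymm hpsub
    intro x hx
    rw [hass]
    exact ⟨hx, 0, hA.1, by rw [h0, mul_zero, mul_zero]⟩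
  set t : G := b / a with htdef
  have ht0 : t ≠ 0 := div_ne_zero hb0 ha
  have hta : t * a = b := by rw [htdef]; exact div_mul_cancel₀ b ha
  -- multiplication by t sends p into A
  have htp : ∀ x ∈ p, t * x ∈ A := by
    intro x hx
    rw [hass] at hx
    obtain ⟨hxA, c, hc, hxb⟩ := hx
    have hc' : t * x = c := by
      rw [htdef, div_mul_eq_mul_div, mul_comm b x, hxb, mul_div_cancel_left₀ _ ha]
    rwa [hc']
  -- t ∉ A
  have htA : t ∉ A := by
    intro htA
    apply hpne
    apply Set.Subset.antisymm hpsub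
    intro x hx
    rw [hass]
    refine ⟨hx, x * t, hA.2.2 x hx t htA, ?_⟩
    rw [mul_comm a (x * t), mul_assoc, hta]
  have hap : a ∈ p := by
    rw [hass]; exact ⟨haA, b, hb, rfl⟩
  -- key decomposition of nonzero elements of p
  have hdec : ∀ x ∈ p, x ≠ 0 →
      ∃ k : ℕ, t ^ k * x ∈ p ∧ t ^ (k + 1) * x ∈ A ∧ t ^ (k + 1) * x ∉ p := by
    intro x hxp hx0
    have hnotall : ¬ ∀ n : ℕ, t ^ n * x ∈ p := by
      intro hall
      obtain ⟨k, hk1, hkA⟩ := aux_chain hA hnoe ht0 hx0 (fun n => hpsub (hall n))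
      exact htA (hnor t ⟨k, hk1, hkA⟩)
    push_neg at hnotall
    obtain ⟨n, hn⟩ := hnotall
    have h0 : t ^ 0 * x ∈ p := by simpa using hxp
    obtain ⟨k, hk, hk1⟩ : ∃ k, t ^ k * x ∈ p ∧ t ^ (k + 1) * x ∉ p := by
      by_contra hcon
      push_neg at hcon
      have hall : ∀ m, t ^ m * x ∈ p := by
        intro m
        induction m with
        | zero => exact h0
        | succ m ih => exact hcon m ih
      exact hn (hall n)
    have hkA : t ^ (k + 1) * x ∈ A := by
      have he : t ^ (k + 1) * x = t * (t ^ k * x) := by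
        rw [pow_succ, mul_comm (t ^ k) t, mul_assoc]
      rw [he]; exact htp _ hk
    exact ⟨k, hk, hkA, hk1⟩
  constructor
  · -- height one
    constructor
    · intro h
      rw [h] at hap
      exact ha hap
    · intro q hq hqp
      by_cases hq0 : q = {0}
      · exact Or.inl hq0
      · right
        obtain ⟨⟨hqsub, hq0mem, hqmul⟩, hqne, hqprime⟩ := hq
        have hqprime' : IsPrimeIn A q := ⟨⟨hqsub, hq0mem, hqmul⟩, hqne, hqprime⟩
        have hexy : ∃ y ∈ q, y ≠ 0 := by
          by_contra hcon
          push_neg at hcon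
          apply hq0
          apply Set.Subset.antisymm
          · intro y hy; exact hcon y hy
          · intro y hy
            rw [Set.mem_singleton_iff] at hy
            rw [hy]; exact hq0mem
        obtain ⟨y, hyq, hy0⟩ := hexy
        apply Set.Subset.antisymm hqp
        intro x hxp
        by_cases hx0 : x = 0
        · rw [hx0]; exact hq0mem
        obtain ⟨mx, _, hsxA, hsxp⟩ := hdec x hxp hx0
        obtain ⟨ny, _, hsyA, hsyp⟩ := hdec y (hqp hyq) hy0
        have key : x ^ (ny + 1) * (t ^ (ny + 1) * y) ^ (mx + 1) =
            y ^ (mx + 1) * (t ^ (mx + 1) * x) ^ (ny + 1) := by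
          rw [mul_pow, mul_pow, ← pow_mul, ← pow_mul, Nat.mul_comm (ny + 1) (mx + 1)]
          simp only [mul_comm, mul_left_comm]
        have hyq' : y ^ (mx + 1) * (t ^ (mx + 1) * x) ^ (ny + 1) ∈ q := by
          have h1 : y ^ (mx + 1) * (t ^ (mx + 1) * x) ^ (ny + 1) =
              (y ^ mx * (t ^ (mx + 1) * x) ^ (ny + 1)) * y := by
            rw [pow_succ, mul_right_comm]
          rw [h1]
          exact hqmul _ (hA.2.2 _ (aux_powMem hA (hqsub hyq) mx) _
            (aux_powMem hA hsxA (ny + 1))) y hyq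
        have hxq : x ^ (ny + 1) * (t ^ (ny + 1) * y) ^ (mx + 1) ∈ q := by
          rw [key]; exact hyq'
        rcases hqprime _ (aux_powMem hA (hpsub hxp) (ny + 1)) _
            (aux_powMem hA hsyA (mx + 1)) hxq with h | h
        · exact aux_powInPrime hA hqprime' (hpsub hxp) ny h
        · exact absurd (hqp (aux_powInPrime hA hqprime' hsyA mx h)) hsyp
  · -- principal maximal ideal of the localization
    obtain ⟨m, hzp, hsA, hsp⟩ := hdec a hap ha
    set z : G := t ^ m * a with hz
    set s0 : G := t ^ (m + 1) * a with hs0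
    have hs0z : s0 = t * z := by
      rw [hs0, hz, pow_succ, mul_comm (t ^ m) t, mul_assoc]
    have hz0 : z ≠ 0 := mul_ne_zero (pow_ne_zero _ ht0) ha
    have hπ : z / s0 = t⁻¹ := by
      rw [hs0z, mul_comm t z, ← div_div, div_self hz0, one_div]
    refine ⟨z / s0, ⟨z, hzp, s0, hsA, hsp, rfl⟩, ?_⟩
    ext g
    constructor
    · rintro ⟨x, hxp, s, hsA', hsp', rfl⟩
      refine ⟨(t * x) / s, ⟨t * x, htp x hxp, s, hsA', hsp', rfl⟩, ?_⟩
      rw [hπ, ← mul_div_assoc, inv_mul_cancel_left₀ ht0]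
    · rintro ⟨h, ⟨yy, hyyA, s, hsA', hsp', rfl⟩, rfl⟩
      refine ⟨z * yy, ?_, s0 * s, hA.2.2 _ hsA _ hsA', ?_, ?_⟩
      · rw [mul_comm z yy]; exact hpmul yy hyyA z hzp
      · intro hmem
        rcases hpprime s0 hsA s hsA' hmem with h | h
        · exact hsp h
        · exact hsp' h
      · exact div_mul_div_comm z s0 yy s
end

section
/- A noetherian normal cancellative pointed abelian monoid A equals the intersection, inside its group completion A₀, of its localizations A_p over all height one prime ideals p. -/
/- conductor set -/
def condSet {G : Type*} [CommGroupWithZero G] (A : Set G) (g : G) : Set G :=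
  {a : G | a ∈ A ∧ a * g ∈ A}

lemma condSet_ideal {G : Type*} [CommGroupWithZero G] {A : Set G}
    (hA : IsSubmonoidWithZero A) (g : G) : IsIdealIn A (condSet A g) := by
  obtain ⟨h0, h1, hmul⟩ := hA
  refine ⟨fun x hx => hx.1, ⟨h0, by rw [zero_mul]; exact h0⟩, ?_⟩
  intro a ha x hx
  exact ⟨hmul a ha x hx.1, by rw [mul_assoc]; exact hmul a ha _ hx.2⟩

lemma exists_maximal_ideal_in {G : Type*} [CommGroupWithZero G] {A : Set G}
    (hnoe : IsNoetherianIn A) (S : Set (Set G)) (hS : ∀ I ∈ S, IsIdealIn A I)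
    (hne : S.Nonempty) : ∃ M ∈ S, ∀ I ∈ S, M ⊆ I → I = M := by
  by_contra hcon
  push_neg at hcon
  obtain ⟨I0, hI0⟩ := hne
  -- hcon : ∀ M ∈ S, ∃ I ∈ S, M ⊆ I ∧ I ≠ M
  have step : ∀ p : {I : Set G // I ∈ S}, ∃ q : {I : Set G // I ∈ S},
      p.1 ⊆ q.1 ∧ q.1 ≠ p.1 := by
    intro p
    obtain ⟨I, hIS, hsub, hne'⟩ := hcon p.1 p.2
    exact ⟨⟨I, hIS⟩, hsub, hne'⟩
  choose F hF1 hF2 using step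
  let f : ℕ → {I : Set G // I ∈ S} := fun n => Nat.rec ⟨I0, hI0⟩ (fun _ p => F p) n
  have hsucc : ∀ n, f (n + 1) = F (f n) := fun n => rfl
  obtain ⟨N, hN⟩ := hnoe (fun n => (f n).1) (fun n => hS _ (f n).2)
    (fun n => hF1 (f n))
  exact hF2 (f N) (hN (N + 1) (Nat.le_succ N))

lemma pow_mem_of_forall_mul_mem {G : Type*} [CommGroupWithZero G] {A : Set G}
    (hA : IsSubmonoidWithZero A) (hnoe : IsNoetherianIn A) {h z : G} (hz0 : z ≠ 0)
    (hall : ∀ n : ℕ, h ^ n * z ∈ A) : ∃ k : ℕ, 1 ≤ k ∧ h ^ k ∈ A := by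
  obtain ⟨h0A, h1A, hmul⟩ := hA
  rcases eq_or_ne h 0 with h0 | hh0
  · exact ⟨1, le_refl 1, by rw [h0, pow_one]; exact h0A⟩
  set I : ℕ → Set G := fun m => {w : G | ∃ i ≤ m, ∃ a ∈ A, w = a * (h ^ i * z)} with hI
  have hid : ∀ m, IsIdealIn A (I m) := by
    intro m
    refine ⟨?_, ⟨0, Nat.zero_le m, 0, h0A, by rw [zero_mul]⟩, ?_⟩
    · rintro w ⟨i, hi, a, haA, rfl⟩
      exact hmul a haA _ (hall i)
    · rintro a haA w ⟨i, hi, b, hbA, rfl⟩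
      exact ⟨i, hi, a * b, hmul a haA b hbA, by rw [mul_assoc]⟩
  have hinc : ∀ m, I m ⊆ I (m + 1) := by
    rintro m w ⟨i, hi, a, haA, rfl⟩
    exact ⟨i, Nat.le_succ_of_le hi, a, haA, rfl⟩
  obtain ⟨N, hN⟩ := hnoe I hid hinc
  have hmem : h ^ (N + 1) * z ∈ I N := by
    rw [← hN (N + 1) (Nat.le_succ N)]
    exact ⟨N + 1, le_refl _, 1, h1A, by rw [one_mul]⟩
  obtain ⟨i, hi, a, haA, heq⟩ := hmem
  refine ⟨N + 1 - i, by omega, ?_⟩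
  have hcz : h ^ (N + 1) = a * h ^ i := by
    have : h ^ (N + 1) * z = (a * h ^ i) * z := by rw [heq, mul_assoc]
    exact mul_right_cancel₀ hz0 this
  have hsplit : h ^ (N + 1) = h ^ i * h ^ (N + 1 - i) := by
    rw [← pow_add]
    congr 1
    omega
  have : h ^ i * h ^ (N + 1 - i) = h ^ i * a := by
    rw [← hsplit, hcz, mul_comm]
  have := mul_left_cancel₀ (pow_ne_zero i hh0) this
  rw [this]; exact haA

/-- A noetherian normal cancellative pointed monoid is the intersection, inside its
group completion, of its localizations at height one primes. -/
theorem eq_inter_localizations_height_one {G : Type*} [CommGroupWithZero G] (A : Set G)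
    (hA : IsSubmonoidWithZero A) (hgc : IsGroupCompletion A)
    (hnor : IsNormalMonoid A) (hnoe : IsNoetherianIn A) :
    A = {g : G | ∀ p : Set G, IsPrimeIn A p → HeightOne A p → g ∈ locAt A p} := by
  obtain ⟨h0A, h1A, hmulA⟩ := hA
  have hA' : IsSubmonoidWithZero A := ⟨h0A, h1A, hmulA⟩
  ext g
  simp only [Set.mem_setOf_eq]
  constructor
  · intro hg p hp _
    refine ⟨g, hg, 1, h1A, ?_, by rw [div_one]⟩
    intro h1p
    apply hp.2.1
    apply Set.Subset.antisymm hp.1.1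
    intro x hx
    have := hp.1.2.2 x hx 1 h1p
    rwa [mul_one] at this
  · intro hg
    by_contra hgA
    -- the family of conductor ideals of non-elements containing condSet A g
    set S : Set (Set G) := {I | ∃ h : G, h ∉ A ∧ I = condSet A h ∧ condSet A g ⊆ I} with hSdef
    have hgS : condSet A g ∈ S := ⟨g, hgA, rfl, Set.Subset.refl _⟩
    have hSid : ∀ I ∈ S, IsIdealIn A I := by
      rintro I ⟨h, _, rfl, _⟩
      exact condSet_ideal hA' h
    obtain ⟨p, hpS, hpmax⟩ := exists_maximal_ideal_in hnoe S hSid ⟨_, hgS⟩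
    obtain ⟨h, hhA, hpe, hDg⟩ := hpS
    have hh0 : h ≠ 0 := fun h0 => hhA (h0 ▸ h0A)
    have hpid : IsIdealIn A p := hpe ▸ condSet_ideal hA' h
    have h1p : (1 : G) ∉ p := by
      rw [hpe]
      intro h1
      have h1' := h1.2
      rw [one_mul] at h1'
      exact hhA h1'
    have hpne : p ≠ A := fun hPA => h1p (hPA ▸ h1A)
    -- p is prime
    have hprime : IsPrimeIn A p := by
      refine ⟨hpid, hpne, ?_⟩
      intro x hx y hy hxy
      by_cases hxp : x ∈ p
      · exact Or.inl hxp
      right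
      have hxhA : x * h ∉ A := by
        intro hc
        exact hxp (hpe ▸ ⟨hx, hc⟩)
      have hsub : p ⊆ condSet A (x * h) := by
        intro a hap
        rw [hpe] at hap
        refine ⟨hap.1, ?_⟩
        rw [mul_left_comm]
        exact hmulA x hx _ hap.2
      have hmemS : condSet A (x * h) ∈ S := ⟨x * h, hxhA, rfl, hDg.trans hsub⟩
      have heqp : condSet A (x * h) = p := hpmax _ hmemS hsub
      have : y ∈ condSet A (x * h) := by
        refine ⟨hy, ?_⟩
        rw [← mul_assoc, mul_comm y x]
        rw [hpe] at hxy
        exact hxy.2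
      rwa [heqp] at this
    -- p ≠ {0}
    obtain ⟨a0, ha0, b0, hb0, hb0ne, hgeq⟩ := hgc g
    have hb0p : b0 ∈ p := by
      apply hDg
      refine ⟨hb0, ?_⟩
      rw [hgeq, mul_div_assoc', mul_comm, mul_div_assoc, div_self hb0ne, mul_one]
      exact ha0
    have hpne0 : p ≠ ({0} : Set G) := by
      intro hp0
      rw [hp0] at hb0p
      exact hb0ne hb0p
    -- p has height one
    have hht : HeightOne A p := by
      refine ⟨hpne0, ?_⟩
      intro q hq hqp
      by_cases hq0 : q = ({0} : Set G)
      · exact Or.inl hq0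
      right
      obtain ⟨z, hzq, hz0⟩ : ∃ z ∈ q, z ≠ 0 := by
        by_contra hc
        push_neg at hc
        apply hq0
        apply Set.Subset.antisymm
        · intro x hx
          exact Set.mem_singleton_iff.mpr (hc x hx)
        · intro x hx
          rw [Set.mem_singleton_iff] at hx
          rw [hx]
          exact hq.1.2.1
      have hnotall : ¬ ∀ n : ℕ, h ^ n * z ∈ q := by
        intro hall
        have : ∃ k : ℕ, 1 ≤ k ∧ h ^ k ∈ A :=
          pow_mem_of_forall_mul_mem hA' hnoe hz0 (fun n => hq.1.1 (hall n))
        exact hhA (hnor h this)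
      push_neg at hnotall
      classical
      -- minimal n with h^n * z ∉ q
      have hex : ∃ n : ℕ, h ^ n * z ∉ q := hnotall
      set n' := Nat.find hex with hn'def
      have hvq : h ^ n' * z ∉ q := Nat.find_spec hex
      have hP0 : ¬ (h ^ 0 * z ∉ q) := by
        rw [pow_zero, one_mul]
        exact not_not_intro hzq
      have hn'pos : 1 ≤ n' := by
        rcases Nat.eq_zero_or_pos n' with h0 | h1
        · exact absurd (h0 ▸ hvq) hP0
        · exact h1
      have hwq : h ^ (n' - 1) * z ∈ q := by
        have := Nat.find_min hex (show n' - 1 < n' by omega)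
        exact not_not.mp this
      set w := h ^ (n' - 1) * z with hwdef
      have hwp : w ∈ p := hqp hwq
      have hv_eq : h ^ n' * z = w * h := by
        rw [hwdef, mul_comm (h ^ (n' - 1) * z) h, ← mul_assoc, ← pow_succ']
        congr 2
        omega
      have hvA : h ^ n' * z ∈ A := by
        rw [hv_eq]
        rw [hpe] at hwp
        exact hwp.2
      -- p ⊆ q
      apply Set.Subset.antisymm hqp
      intro t htp
      have hthA : t * h ∈ A := by
        rw [hpe] at htp
        exact htp.2
      have htv : t * (h ^ n' * z) ∈ q := by
        rw [hv_eq, mul_comm w h, ← mul_assoc]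
        exact hq.1.2.2 _ hthA w hwq
      have := hq.2.2 t (hpid.1 htp) _ hvA htv
      rcases this with h1 | h2
      · exact h1
      · exact absurd h2 hvq
    -- contradiction with hypothesis
    obtain ⟨x, hx, s, hs, hsp, hgxs⟩ := hg p hprime hht
    have hs0 : s ≠ 0 := fun h0 => hsp (h0 ▸ hpid.2.1)
    apply hsp
    apply hDg
    refine ⟨hs, ?_⟩
    rw [hgxs, mul_div_assoc', mul_comm, mul_div_assoc, div_self hs0, mul_one]
    exact hx
end

section
/- Let A be a cancellative pointed abelian monoid with group completion A₀, and let A_sn = {b ∈ A₀ : bⁿ ∈ A for all sufficiently large n}. If b is a unit of A_sn (i.e., both b and b⁻¹ lie in A_sn), then b is a unit of A. -/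
/-- Units of the seminormalization `A_sn = {b ∈ A₀ : bⁿ ∈ A for all n ≫ 0}`
are units of `A`. -/
theorem unit_of_seminormalization_is_unit {G : Type*} [CommGroupWithZero G] (A : Set G)
    (hA : IsSubmonoidWithZero A) (hgc : IsGroupCompletion A)
    (b c : G)
    (hb : b ∈ {g : G | ∃ N : ℕ, ∀ n : ℕ, N ≤ n → g ^ n ∈ A})
    (hc : c ∈ {g : G | ∃ N : ℕ, ∀ n : ℕ, N ≤ n → g ^ n ∈ A})
    (hbc : b * c = 1) :
    b ∈ A ∧ c ∈ A := by
  obtain ⟨N, hN⟩ := hb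
  obtain ⟨M, hM⟩ := hc
  set n := max N M with hn
  have key : ∀ x y : G, x * y = 1 → x ^ (n + 1) ∈ A → y ^ n ∈ A → x ∈ A := by
    intro x y hxy hx hy
    have : x = x ^ (n + 1) * y ^ n := by
      rw [pow_succ', mul_assoc, ← mul_pow, hxy, one_pow, mul_one]
    rw [this]
    exact hA.2.2 _ hx _ hy
  refine ⟨key b c hbc (hN _ (le_trans (le_max_left N M) (Nat.le_succ n))) (hM _ (le_max_right N M)),
    key c b (by rw [mul_comm]; exact hbc) (hM _ (le_trans (le_max_right N M) (Nat.le_succ n))) (hN _ (le_max_left N M))⟩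
end

section
/- Let A be a cancellative pointed abelian monoid. Then A_sn = {b ∈ A₀ : bⁿ ∈ A for all n ≫ 0} ∪ {0} is a submonoid of A₀ containing A, and A_sn is seminormal: whenever b, c ∈ A_sn satisfy b³ = c², there exists a ∈ A_sn with a² = b and a³ = c. -/
/-- The seminormalization `A_sn = {b ∈ A₀ : bⁿ ∈ A for all n ≫ 0} ∪ {0}` is a
submonoid of `A₀` containing `A`, and it is seminormal. -/
theorem seminormalization_is_seminormal {G : Type*} [CommGroupWithZero G] (A : Set G)
    (hA : IsSubmonoidWithZero A) (hgc : IsGroupCompletion A)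
    (Asn : Set G)
    (hAsn : Asn = {g : G | ∃ N : ℕ, ∀ n : ℕ, N ≤ n → g ^ n ∈ A} ∪ {0}) :
    A ⊆ Asn ∧ (1 : G) ∈ Asn ∧ (∀ x ∈ Asn, ∀ y ∈ Asn, x * y ∈ Asn) ∧
      ∀ b ∈ Asn, ∀ c ∈ Asn, b ^ 3 = c ^ 2 → ∃ a ∈ Asn, a ^ 2 = b ∧ a ^ 3 = c := by
  obtain ⟨h0, h1, hmul⟩ := hA
  have hpow : ∀ a ∈ A, ∀ n : ℕ, 1 ≤ n → a ^ n ∈ A := by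
    intro a ha n hn
    induction n with
    | zero => omega
    | succ k ih =>
      rcases Nat.eq_zero_or_pos k with h | h
      · subst h; simpa using ha
      · rw [pow_succ]; exact hmul _ (ih h) _ ha
  subst hAsn
  have memL : ∀ g : G, (∃ N : ℕ, ∀ n : ℕ, N ≤ n → g ^ n ∈ A) →
      g ∈ ({g : G | ∃ N : ℕ, ∀ n : ℕ, N ≤ n → g ^ n ∈ A} ∪ {0}) := by
    intro g hg; exact Or.inl hg
  refine ⟨?_, ?_, ?_, ?_⟩
  · intro a ha
    exact memL a ⟨1, fun n hn => hpow a ha n hn⟩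
  · exact memL 1 ⟨1, fun n _ => by simpa using h1⟩
  · rintro x (⟨Nx, hx⟩ | hx) y (⟨Ny, hy⟩ | hy)
    · refine memL _ ⟨max Nx Ny, fun n hn => ?_⟩
      rw [mul_pow]
      exact hmul _ (hx n (le_trans (le_max_left _ _) hn)) _
        (hy n (le_trans (le_max_right _ _) hn))
    · simp only [Set.mem_singleton_iff] at hy; subst hy
      exact Or.inr (by simp)
    · simp only [Set.mem_singleton_iff] at hx; subst hx
      exact Or.inr (by simp)
    · simp only [Set.mem_singleton_iff] at hx; subst hx
      exact Or.inr (by simp)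
  · intro b hb c hc hbc
    by_cases hb0 : b = 0
    · subst hb0
      have hc0 : c = 0 := by
        have : c ^ 2 = 0 := by rw [← hbc]; simp
        exact pow_eq_zero_iff (by norm_num) |>.mp this
      subst hc0
      exact ⟨0, Or.inr rfl, by simp, by simp⟩
    · have hc0 : c ≠ 0 := by
        intro h; subst h
        exact hb0 (pow_eq_zero_iff (n := 3) (by norm_num) |>.mp (by simpa using hbc))
      obtain ⟨Nb, hbN⟩ : ∃ N : ℕ, ∀ n : ℕ, N ≤ n → b ^ n ∈ A := by
        rcases hb with h | h
        · exact h
        · exact absurd h hb0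
      obtain ⟨Nc, hcN⟩ : ∃ N : ℕ, ∀ n : ℕ, N ≤ n → c ^ n ∈ A := by
        rcases hc with h | h
        · exact h
        · exact absurd h hc0
      have key : ∀ x : G, x ≠ 0 → x ^ 3 / x ^ 2 = x := by
        intro x hx
        rw [pow_succ, mul_comm, mul_div_assoc, div_self (pow_ne_zero 2 hx), mul_one]
      have ha2 : (c / b) ^ 2 = b := by
        rw [div_pow, ← hbc, key b hb0]
      have ha3 : (c / b) ^ 3 = c := by
        rw [div_pow, hbc, key c hc0]
      refine ⟨c / b, ?_, ha2, ha3⟩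
      refine memL _ ⟨2 * Nb + 3 * Nc + 2, fun n hn => ?_⟩
      obtain ⟨i, j, hij⟩ : ∃ i j : ℕ, n = 2 * (Nb + i) + 3 * (Nc + j) := by
        set m := n - (2 * Nb + 3 * Nc) with hm
        have hm2 : 2 ≤ m := by omega
        rcases Nat.even_or_odd m with ⟨k, hk⟩ | ⟨k, hk⟩
        · exact ⟨k, 0, by omega⟩
        · exact ⟨k - 1, 1, by omega⟩
      have : (c / b) ^ n = b ^ (Nb + i) * c ^ (Nc + j) := by
        rw [hij, pow_add, pow_mul, pow_mul, ha2, ha3]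
      rw [this]
      exact hmul _ (hbN _ (by omega)) _ (hcN _ (by omega))
end

section
/- Let A be a noetherian pointed abelian monoid and I an ideal with a minimal primary decomposition I = q₁ ∩ ... ∩ qₙ where qᵢ is pᵢ-primary. Then the minimal elements among {p₁,...,pₙ} are exactly the prime ideals minimal over I (primes containing I that do not strictly contain another prime containing I). -/
def IsPrimeIdeal {A : Type*} [CommMonoidWithZero A] (p : Set A) : Prop :=
  IsIdeal p ∧ p ≠ Set.univ ∧ ∀ x y : A, x * y ∈ p → x ∈ p ∨ y ∈ p

def radIdeal {A : Type*} [CommMonoidWithZero A] (I : Set A) : Set A :=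
  {a : A | ∃ n : ℕ, 1 ≤ n ∧ a ^ n ∈ I}

lemma ideal_one_notMem {A : Type*} [CommMonoidWithZero A] {I : Set A}
    (hI : IsIdeal I) (hne : I ≠ Set.univ) : (1 : A) ∉ I := by
  intro h1
  apply hne
  ext a
  simp only [Set.mem_univ, iff_true]
  simpa using hI.2 a 1 h1

lemma prime_pow_mem {A : Type*} [CommMonoidWithZero A] {r : Set A}
    (hr : IsPrimeIdeal r) : ∀ n : ℕ, ∀ a : A, a ^ (n + 1) ∈ r → a ∈ r := by
  intro n
  induction n with
  | zero => intro a ha; simpa using ha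
  | succ m ih =>
    intro a ha
    rw [pow_succ] at ha
    rcases hr.2.2 _ _ ha with h | h
    · exact ih a h
    · exact h

lemma rad_subset_prime {A : Type*} [CommMonoidWithZero A] {q r : Set A}
    (hr : IsPrimeIdeal r) (h : q ⊆ r) : radIdeal q ⊆ r := by
  rintro a ⟨m, hm, ham⟩
  obtain ⟨k, rfl⟩ : ∃ k, m = k + 1 := ⟨m - 1, by omega⟩
  exact prime_pow_mem hr k a (h ham)

lemma rad_primary_prime {A : Type*} [CommMonoidWithZero A] {q : Set A}
    (hq : IsPrimaryIdeal q) : IsPrimeIdeal (radIdeal q) := by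
  obtain ⟨⟨h0, hmul⟩, hne, hprim⟩ := hq
  refine ⟨⟨⟨1, le_refl 1, by simpa using h0⟩, ?_⟩, ?_, ?_⟩
  · rintro a x ⟨m, hm, hx⟩
    exact ⟨m, hm, by rw [mul_pow]; exact hmul _ _ hx⟩
  · intro h
    have h1 : (1 : A) ∈ radIdeal q := h ▸ Set.mem_univ 1
    obtain ⟨m, hm, hx⟩ := h1
    exact ideal_one_notMem ⟨h0, hmul⟩ hne (by simpa using hx)
  · rintro x y ⟨m, hm, hxy⟩
    rw [mul_pow] at hxy
    rcases hprim _ _ hxy with h | ⟨k, hk, h⟩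
    · exact Or.inl ⟨m, hm, h⟩
    · refine Or.inr ⟨m * k, by simpa using Nat.mul_le_mul hm hk, ?_⟩
      rw [pow_mul]; exact h

lemma prime_inter_subset {A : Type*} [CommMonoidWithZero A] {n : ℕ}
    {q : Fin n → Set A} (hq : ∀ i, IsIdeal (q i)) {r : Set A}
    (hr : IsPrimeIdeal r) (h : (⋂ i, q i) ⊆ r) : ∃ i, q i ⊆ r := by
  by_contra hc
  push_neg at hc
  simp only [Set.not_subset] at hc
  choose x hx hxr using hc
  have hz : ∀ j, (∏ i, x i) ∈ q j := by
    intro j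
    have h1 : (∏ i, x i) = (∏ i ∈ Finset.univ.erase j, x i) * x j := by
      rw [mul_comm, Finset.mul_prod_erase _ _ (Finset.mem_univ j)]
    rw [h1]
    exact (hq j).2 _ _ (hx j)
  have hzr : (∏ i, x i) ∈ r := h (Set.mem_iInter.2 hz)
  have key : ∀ s : Finset (Fin n), (∏ i ∈ s, x i) ∈ r → ∃ i ∈ s, x i ∈ r := by
    intro s
    induction s using Finset.induction_on with
    | empty =>
      intro hmem
      rw [Finset.prod_empty] at hmem
      exact absurd hmem (ideal_one_notMem hr.1 hr.2.1)
    | @insert a s hni ih =>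
      intro hmem
      rw [Finset.prod_insert hni] at hmem
      rcases hr.2.2 _ _ hmem with h1 | h1
      · exact ⟨a, Finset.mem_insert_self _ _, h1⟩
      · obtain ⟨i, hi, hir⟩ := ih h1
        exact ⟨i, Finset.mem_insert_of_mem hi, hir⟩
  obtain ⟨i, _, hir⟩ := key Finset.univ hzr
  exact hxr i hir

/-- Given a minimal primary decomposition `I = q₁ ∩ ... ∩ qₙ` with `qᵢ`
`pᵢ`-primary, the minimal elements among the `pᵢ` are exactly the primes
minimal over `I`. -/
theorem minimal_associated_primes {A : Type*} [CommMonoidWithZero A]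
    (hA : IsNoetherianMonoid A) (n : ℕ) (I : Set A) (hI : IsIdeal I)
    (q p : Fin n → Set A)
    (hq : ∀ i, IsPrimaryIdeal (q i)) (hrad : ∀ i, radIdeal (q i) = p i)
    (hdecomp : I = ⋂ i, q i)
    (hdistinct : Function.Injective p)
    (hmin : ∀ i : Fin n, ¬ (⋂ j ∈ ({i}ᶜ : Set (Fin n)), q j) ⊆ q i) :
    ∀ p' : Set A,
      ((∃ i, p' = p i ∧ ∀ j, p j ⊆ p' → p j = p') ↔
        (IsPrimeIdeal p' ∧ I ⊆ p' ∧
          ∀ r : Set A, IsPrimeIdeal r → I ⊆ r → r ⊆ p' → r = p')) := by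
  intro p'
  have hq_ideal : ∀ i, IsIdeal (q i) := fun i => (hq i).1
  have hp_prime : ∀ i, IsPrimeIdeal (p i) := fun i => hrad i ▸ rad_primary_prime (hq i)
  have hqp : ∀ i, q i ⊆ p i := by
    intro i a ha
    rw [← hrad i]
    exact ⟨1, le_refl 1, by simpa using ha⟩
  have hIp : ∀ i, I ⊆ p i := fun i => hdecomp ▸ (Set.iInter_subset q i).trans (hqp i)
  constructor
  · rintro ⟨i, rfl, hmin'⟩
    refine ⟨hp_prime i, hIp i, ?_⟩
    intro r hr hIr hrp
    obtain ⟨j, hj⟩ := prime_inter_subset hq_ideal hr (hdecomp ▸ hIr)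
    have hjr : p j ⊆ r := (hrad j) ▸ rad_subset_prime hr hj
    have hj_eq : p j = p i := hmin' j (hjr.trans hrp)
    exact Set.Subset.antisymm hrp (hj_eq ▸ hjr)
  · rintro ⟨hp', hIp', hmin'⟩
    obtain ⟨j, hj⟩ := prime_inter_subset hq_ideal hp' (hdecomp ▸ hIp')
    have hjp : p j ⊆ p' := (hrad j) ▸ rad_subset_prime hp' hj
    have hj_eq : p j = p' := hmin' (p j) (hp_prime j) (hIp j) hjp
    exact ⟨j, hj_eq.symm, fun k hk => hmin' (p k) (hp_prime k) (hIp k) hk⟩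
end
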